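/- arXiv:1410.0297 — 2 statements merged into one kernel-verified Lean document; each statement's English description precedes it below -/
import Mathlib

section
/- Fix integers c ≥ 0 and b ≥ 2, and set d = gcd(2, b-1). If a finite nonempty set T of positive integers is [c,b]-good, then all elements of T are congruent modulo d. -/
/-!
If `b` is even then `d = 1` and there is nothing to prove. If `b` is odd, a number is congruent
to its base-`b` digit sum modulo 2 and `x ^ 2 ≡ x [MOD 2]`, so `S_{[c,b]} a ≡ a + c [MOD 2]`
and `S_{[c,b]}^k (t + n) ≡ t + n + k c [MOD 2]`. Goodness applied to any `u ∈ U_{[c,b]}` then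
makes `t₁ + n + k c` and `t₂ + n + k c` congruent modulo 2. Such a `u` exists: for large `K`,
`S_{[c,b]}` maps the finite set `(0, b ^ K)` into itself, so it has a periodic point there.
-/

/-- The augmented generalized happy function `S_{[c,b]}`: it maps `a` to `c` plus the
sum of the squares of the base-`b` digits of `a`. -/
def S (c b a : ℕ) : ℕ := c + ((Nat.digits b a).map (· ^ 2)).sum


/-- `u ∈ U_{[c,b]}`: `u` is a positive integer that is a periodic point of `S_{[c,b]}`. -/
def inU (c b u : ℕ) : Prop := 0 < u ∧ ∃ m, 0 < m ∧ (S c b)^[m] u = u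


/-- A finite set `T` of positive integers is `[c,b]`-good if for each `u ∈ U_{[c,b]}`
there exist `n, k ≥ 0` such that `S_{[c,b]}^k (t + n) = u` for all `t ∈ T`. -/
def Good (c b : ℕ) (T : Finset ℕ) : Prop :=
  ∀ u, inU c b u → ∃ n k : ℕ, ∀ t ∈ T, (S c b)^[k] (t + n) = u

open Function Set

theorem Set.Finite.exists_periodic_of_mapsTo {α : Type*} {f : α → α} {s : Set α}
    (hs : s.Finite) (hf : MapsTo f s s) {x : α} (hx : x ∈ s) :
    ∃ y ∈ s, ∃ m, 0 < m ∧ f^[m] y = y := by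
  have := hs.to_subtype
  obtain ⟨i, j, hij, heq⟩ := Finite.exists_ne_map_eq_of_infinite
    fun i : ℕ ↦ (⟨f^[i] x, hf.iterate i hx⟩ : s)
  replace heq : f^[i] x = f^[j] x := congrArg Subtype.val heq
  wlog hlt : i < j generalizing i j
  · exact this j i hij.symm heq.symm (by omega)
  refine ⟨f^[i] x, hf.iterate i hx, j - i, by omega, ?_⟩
  rw [← iterate_add_apply, Nat.sub_add_cancel hlt.le, heq]

lemma S_le_add_length_mul (c b a : ℕ) (hb : 1 < b) :
    S c b a ≤ c + (Nat.digits b a).length * (b - 1) ^ 2 := by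
  refine Nat.add_le_add_left ?_ c
  refine (List.sum_le_card_nsmul ((Nat.digits b a).map (· ^ 2)) ((b - 1) ^ 2)
    fun y hy ↦ ?_).trans_eq (by simp)
  obtain ⟨x, hx, rfl⟩ := List.mem_map.mp hy
  exact Nat.pow_le_pow_left (Nat.le_sub_one_of_lt (Nat.digits_lt_base hb hx)) 2

lemma S_pos (c b : ℕ) {a : ℕ} (ha : 0 < a) : 0 < S c b a := by
  have hne : Nat.digits b a ≠ [] := Nat.digits_ne_nil_iff_ne_zero.mpr ha.ne'
  have hlead := Nat.getLast_digit_ne_zero b ha.ne'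
  have := List.single_le_sum (fun x _ ↦ Nat.zero_le x) _
    (List.mem_map_of_mem (f := (· ^ 2)) (List.getLast_mem hne))
  have : 0 < (Nat.digits b a).getLast hne ^ 2 := by positivity
  unfold S
  omega

lemma exists_add_mul_lt_pow (c b : ℕ) (hb : 1 < b) :
    ∃ K, 0 < K ∧ c + K * (b - 1) ^ 2 < b ^ K := by
  set s := c + (b - 1) ^ 2 with hs
  have hs_pos : 0 < s := by have := pow_pos (Nat.sub_pos_of_lt hb) 2; omega
  refine ⟨4 * s, by omega, ?_⟩
  have h2s : 2 * s < 2 ^ (2 * s) := Nat.lt_two_pow_self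
  calc c + 4 * s * (b - 1) ^ 2 ≤ 4 * s * c + 4 * s * (b - 1) ^ 2 := by
        gcongr; exact Nat.le_mul_of_pos_left c (by omega)
    _ = (2 * s) ^ 2 := by rw [hs]; ring
    _ < (2 ^ (2 * s)) ^ 2 := by gcongr
    _ = 2 ^ (4 * s) := by rw [← pow_mul]; ring_nf
    _ ≤ b ^ (4 * s) := Nat.pow_le_pow_left hb _

lemma exists_inU (c b : ℕ) (hb : 1 < b) : ∃ u, inU c b u := by
  obtain ⟨K, hK_pos, hK⟩ := exists_add_mul_lt_pow c b hb
  have hmaps : MapsTo (S c b) (Ioo 0 (b ^ K)) (Ioo 0 (b ^ K)) := fun a ha ↦ by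
    refine ⟨S_pos c b ha.1, (S_le_add_length_mul c b a hb).trans_lt (lt_of_le_of_lt ?_ hK)⟩
    gcongr
    exact (Nat.digits_length_le_iff hb a).mpr ha.2
  obtain ⟨u, hu, hper⟩ := (finite_Ioo 0 (b ^ K)).exists_periodic_of_mapsTo hmaps
    ⟨Nat.one_pos, Nat.one_lt_pow hK_pos.ne' hb⟩
  exact ⟨u, hu.1, hper⟩

lemma S_modEq_two (c b a : ℕ) (hb : b % 2 = 1) : S c b a ≡ c + a [MOD 2] := by
  refine Nat.ModEq.add_left c ?_
  calc ((Nat.digits b a).map (· ^ 2)).sum ≡ ((Nat.digits b a).map id).sum [MOD 2] :=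
        Nat.ModEq.listSum_map fun x _ ↦ by
          rcases Nat.mod_two_eq_zero_or_one x with h | h <;> simp [Nat.ModEq, Nat.pow_mod, h]
    _ = (Nat.digits b a).sum := by simp
    _ ≡ a [MOD 2] := (Nat.modEq_digits_sum 2 b hb a).symm

lemma iterate_S_modEq_two (c b : ℕ) (hb : b % 2 = 1) (k a : ℕ) :
    (S c b)^[k] a ≡ a + k * c [MOD 2] := by
  induction k generalizing a with
  | zero => simp [Nat.ModEq.refl]
  | succ k ih =>
    rw [iterate_succ_apply]
    calc (S c b)^[k] (S c b a) ≡ S c b a + k * c [MOD 2] := ih _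
      _ ≡ c + a + k * c [MOD 2] := (S_modEq_two c b a hb).add_right _
      _ = a + (k + 1) * c := by ring

theorem stmt_9_general (c b : ℕ) (hb : 2 ≤ b) (d : ℕ) (hd : d = Nat.gcd 2 (b - 1))
    (T : Finset ℕ)
    (h : Good c b T) :
    ∀ t₁ ∈ T, ∀ t₂ ∈ T, t₁ ≡ t₂ [MOD d] := by
  intro t₁ ht₁ t₂ ht₂
  rcases (Nat.dvd_prime Nat.prime_two).mp (hd ▸ Nat.gcd_dvd_left 2 (b - 1)) with rfl | rfl
  · exact Nat.modEq_one
  have hb_odd : b % 2 = 1 := by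
    have : 2 ∣ b - 1 := hd ▸ Nat.gcd_dvd_right 2 (b - 1)
    omega
  obtain ⟨u, hu⟩ := exists_inU c b hb
  obtain ⟨n, k, hk⟩ := h u hu
  have h₁ := hk t₁ ht₁ ▸ iterate_S_modEq_two c b hb_odd k (t₁ + n)
  have h₂ := hk t₂ ht₂ ▸ iterate_S_modEq_two c b hb_odd k (t₂ + n)
  exact Nat.ModEq.add_right_cancel' (n + k * c) <| by
    simpa only [add_assoc] using h₁.symm.trans h₂

theorem stmt_9 (c b : ℕ) (hb : 2 ≤ b) (d : ℕ) (hd : d = Nat.gcd 2 (b - 1))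
    (T : Finset ℕ) (hpos : ∀ t ∈ T, 0 < t) (hne : T.Nonempty)
    (h : Good c b T) :
    ∀ t₁ ∈ T, ∀ t₂ ∈ T, t₁ ≡ t₂ [MOD d] :=
  stmt_9_general c b hb d hd T h
end

section
/- Fix integers c ≥ 0 and b ≥ 2 with b odd, and let u ∈ U_{[c,b]}. Then there exist arbitrarily long finite 2-consecutive sequences of u-attracted numbers for S_{[c,b]}: for every positive integer N there exists a positive integer n such that n, n + 2, n + 4, …, n + 2(N-1) are all u-attracted. -/
def digitSqSum (b n : ℕ) : ℕ := ((Nat.digits b n).map (· ^ 2)).sum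

namespace digitSqSum

variable {b : ℕ}

@[simp]
lemma zero : digitSqSum b 0 = 0 := by simp [digitSqSum]

lemma of_lt {n : ℕ} (h : n < b) : digitSqSum b n = n ^ 2 := by
  rcases eq_or_ne n 0 with rfl | hn
  · simp
  · simp [digitSqSum, Nat.digits_of_lt b n hn h]

lemma add_pow_mul (hb : 1 < b) {k n : ℕ} (hn : n < b ^ k) (m : ℕ) :
    digitSqSum b (n + b ^ k * m) = digitSqSum b n + digitSqSum b m := by
  rcases eq_or_ne m 0 with rfl | hm
  · simp
  have hlen := (Nat.digits_length_le_iff hb n).mpr hn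
  rw [← Nat.add_sub_cancel' hlen, digitSqSum,
    ← Nat.digits_append_zeroes_append_digits hb (Nat.pos_of_ne_zero hm)]
  simp [digitSqSum]

lemma pow_mul (hb : 1 < b) (k m : ℕ) : digitSqSum b (b ^ k * m) = digitSqSum b m := by
  simpa using add_pow_mul hb (pow_pos (zero_lt_one.trans hb) k) m

lemma modEq_two (hbo : Odd b) (n : ℕ) : digitSqSum b n ≡ n [MOD 2] := by
  rw [← ZMod.natCast_eq_natCast_iff, (ZMod.natCast_eq_natCast_iff _ _ _).mpr
    (Nat.modEq_digits_sum 2 b (Nat.odd_iff.mp hbo) n)]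
  simp [digitSqSum, Function.comp_def, ZMod.pow_card]

lemma add_modEq_two (hbo : Odd b) {p q : ℕ} (h : p ≡ q [MOD 2]) (z : ℕ) :
    digitSqSum b (z + p) ≡ digitSqSum b (z + q) [MOD 2] :=
  (modEq_two hbo _).trans ((h.add_left z).trans (modEq_two hbo _).symm)

lemma exists_eq (hb : 1 < b) (s : ℕ) : ∃ m, digitSqSum b m = s := by
  induction s with
  | zero => exact ⟨0, zero⟩
  | succ s ih =>
    obtain ⟨m, rfl⟩ := ih
    refine ⟨m + b ^ m * 1, ?_⟩
    rw [add_pow_mul hb (Nat.lt_pow_self hb) 1, of_lt hb, one_pow]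

lemma exists_add_eq_of_modEq (hb : 1 < b) {p q : ℕ} (h : p ≡ q [MOD b - 1]) :
    ∃ z, digitSqSum b (z + p) = digitSqSum b (z + q) := by
  wlog hqp : q ≤ p generalizing p q
  · obtain ⟨z, hz⟩ := this h.symm (by omega)
    exact ⟨z, hz.symm⟩
  obtain ⟨m, hm⟩ := (Nat.modEq_iff_dvd' hqp).mp h.symm
  rw [Nat.sub_one_mul] at hm
  have h2m : 2 * m ≤ b * m := Nat.mul_le_mul_right m hb
  have hmp : m ≤ p := by omega
  have hpK : p < b ^ p := Nat.lt_pow_self hb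
  have hpK' : p + 1 < b ^ (p + 1) := Nat.lt_pow_self hb
  have hbmK : b * m < b ^ (p + 1) := by
    rw [pow_succ']
    exact Nat.mul_lt_mul_of_pos_left (hmp.trans_lt hpK) (by omega)
  have hmK : m < b ^ (p + 1) := (Nat.le_mul_of_pos_left m (by omega)).trans_lt hbmK
  -- `z + q` and `z + p` are `m` and `b * m` with the same leading digit `1` prepended
  refine ⟨m + b ^ (p + 1) - q, ?_⟩
  have hbm' := pow_mul hb 1 m
  rw [pow_one] at hbm'
  rw [show m + b ^ (p + 1) - q + p = b * m + b ^ (p + 1) * 1 by omega,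
    show m + b ^ (p + 1) - q + q = m + b ^ (p + 1) * 1 by omega,
    add_pow_mul hb hbmK, add_pow_mul hb hmK, hbm']

lemma exists_add_modEq (hb : 1 < b) (hbo : Odd b) {o₁ o₂ : ℕ} (hne : o₁ ≠ o₂)
    (h : o₁ ≡ o₂ [MOD 2]) : ∃ z, digitSqSum b (z + o₁) ≡ digitSqSum b (z + o₂) [MOD b - 1] := by
  wlog hlt : o₁ < o₂ generalizing o₁ o₂
  · obtain ⟨z, hz⟩ := this hne.symm h.symm (by omega)
    exact ⟨z, hz.symm⟩
  obtain ⟨t, ht⟩ := hbo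
  have ht0 : 0 < t := by omega
  have hL : o₂ < b ^ o₂ := Nat.lt_pow_self hb
  set D := digitSqSum b (b ^ o₂ - (o₂ - o₁))
  have hD : D % 2 = 1 := by
    have hδ := (Nat.modEq_iff_dvd' hlt.le).mp h
    have hpow : b ^ o₂ % 2 = 1 := Nat.odd_iff.mp (Odd.pow ⟨t, ht⟩)
    have := modEq_two ⟨t, ht⟩ (b ^ o₂ - (o₂ - o₁))
    unfold Nat.ModEq at this
    omega
  -- `z + o₂ = b ^ o₂ * (a + 1)` and `z + o₁ = b ^ o₂ * a + (b ^ o₂ - (o₂ - o₁))` have square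
  -- sums `(a + 1) ^ 2` and `a ^ 2 + D`; as `D` is odd and `b - 1` even, some digit `a < t`
  -- makes these congruent
  set a := D / 2 % t
  have hat : a < t := Nat.mod_lt _ ht0
  have ha : 2 * a + 1 ≡ D [MOD b - 1] := by
    have := Nat.mod_le (D / 2) t
    refine (Nat.modEq_iff_dvd' (by omega)).mpr ⟨D / 2 / t, ?_⟩
    have := Nat.div_add_mod (D / 2) t
    rw [ht, Nat.add_sub_cancel, mul_assoc]
    omega
  refine ⟨b ^ o₂ * a + b ^ o₂ - o₂, ?_⟩
  rw [show b ^ o₂ * a + b ^ o₂ - o₂ + o₁ = (b ^ o₂ - (o₂ - o₁)) + b ^ o₂ * a by omega,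
    show b ^ o₂ * a + b ^ o₂ - o₂ + o₂ = b ^ o₂ * (a + 1) by rw [Nat.mul_succ]; omega,
    add_pow_mul hb (by omega), pow_mul hb, of_lt (n := a) (by omega),
    of_lt (n := a + 1) (by omega), add_comm, show (a + 1) ^ 2 = a ^ 2 + (2 * a + 1) by ring]
  exact ha.symm.add_left _

end digitSqSum

section Attraction

variable (c b u : ℕ)

def Attracted (x : ℕ) : Prop := ∃ k, (S c b)^[k] x = u

def HasLargeAttractedTranslates (F : Finset ℕ) : Prop :=
  ∀ B, ∃ M, B ≤ M ∧ ∀ o ∈ F, Attracted c b u (M + o)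

variable {c b u}

lemma S_eq (a : ℕ) : S c b a = c + digitSqSum b a := rfl

lemma Attracted.of_S {x : ℕ} (h : Attracted c b u (S c b x)) : Attracted c b u x :=
  let ⟨k, hk⟩ := h
  ⟨k + 1, hk⟩

lemma HasLargeAttractedTranslates.mono {F G : Finset ℕ} (h : HasLargeAttractedTranslates c b u G)
    (hFG : F ⊆ G) : HasLargeAttractedTranslates c b u F := fun B =>
  let ⟨M, hBM, hM⟩ := h B
  ⟨M, hBM, fun o ho => hM o (hFG ho)⟩

lemma hasLargeAttractedTranslates_singleton (hb : 1 < b) (hu : inU c b u) (o : ℕ) :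
    HasLargeAttractedTranslates c b u {o} := by
  obtain ⟨hu0, m, hm, hmu⟩ := hu
  have hSu : Attracted c b u (S c b u) :=
    ⟨m - 1, by rw [← Function.iterate_succ_apply, Nat.succ_eq_add_one, Nat.sub_add_cancel hm, hmu]⟩
  intro B
  have hK : B + o < b ^ (B + o) := Nat.lt_pow_self hb
  have hKu : b ^ (B + o) ≤ b ^ (B + o) * u := Nat.le_mul_of_pos_right _ hu0
  refine ⟨b ^ (B + o) * u - o, by omega, ?_⟩
  simp only [Finset.mem_singleton, forall_eq]
  rw [Nat.sub_add_cancel (by omega)]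
  exact Attracted.of_S (by rwa [S_eq, digitSqSum.pow_mul hb, ← S_eq])

lemma HasLargeAttractedTranslates.of_image_digitSqSum (hb : 1 < b) {F : Finset ℕ} (z : ℕ)
    (h : HasLargeAttractedTranslates c b u (F.image fun o => digitSqSum b (z + o))) :
    HasLargeAttractedTranslates c b u F := by
  intro B
  obtain ⟨M, hcM, hM⟩ := h (c + 1)
  obtain ⟨m, hm⟩ := digitSqSum.exists_eq hb (M - c)
  have hm0 : m ≠ 0 := by
    rintro rfl
    simp only [digitSqSum.zero] at hm
    omega
  set K := z + F.sup id + B with hK_def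
  have hK : K < b ^ K := Nat.lt_pow_self hb
  have hKm : b ^ K ≤ b ^ K * m := Nat.le_mul_of_pos_right _ (Nat.pos_of_ne_zero hm0)
  refine ⟨z + b ^ K * m, by omega, fun o ho => ?_⟩
  have hoK : z + o < b ^ K := by
    have : o ≤ F.sup id := Finset.le_sup (f := id) ho
    omega
  apply Attracted.of_S
  rw [S_eq, show z + b ^ K * m + o = z + o + b ^ K * m by ring, digitSqSum.add_pow_mul hb hoK, hm,
    show c + (digitSqSum b (z + o) + (M - c)) = M + digitSqSum b (z + o) by omega]
  exact hM _ (Finset.mem_image_of_mem _ ho)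

lemma hasLargeAttractedTranslates_of_modEq_two (hb : 1 < b) (hbo : Odd b) (hu : inU c b u)
    (F : Finset ℕ) (hF : ∀ o ∈ F, ∀ o' ∈ F, o ≡ o' [MOD 2]) :
    HasLargeAttractedTranslates c b u F := by
  induction hn : F.card using Nat.strong_induction_on generalizing F with
  | _ n ih =>
    rcases le_or_gt n 1 with h1 | h1
    · obtain ⟨o, ho⟩ := Finset.card_le_one_iff_subset_singleton.mp (hn ▸ h1)
      exact (hasLargeAttractedTranslates_singleton hb hu o).mono ho
    obtain ⟨o₁, ho₁, o₂, ho₂, hne⟩ := Finset.one_lt_card.mp (hn ▸ h1)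
    obtain ⟨z₁, hz₁⟩ := digitSqSum.exists_add_modEq hb hbo hne (hF o₁ ho₁ o₂ ho₂)
    obtain ⟨z₂, hz₂⟩ := digitSqSum.exists_add_eq_of_modEq hb hz₁
    set G := (F.image fun o => digitSqSum b (z₁ + o)).image fun p => digitSqSum b (z₂ + p)
    have hG : G.card < n := by
      simp only [G, Finset.image_image, ← hn]
      exact Finset.card_image_le.lt_of_ne fun h => hne (Finset.card_image_iff.mp h ho₁ ho₂ hz₂)
    have hGpar : ∀ p ∈ G, ∀ p' ∈ G, p ≡ p' [MOD 2] := by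
      simp only [G, Finset.forall_mem_image]
      exact fun o ho o' ho' =>
        digitSqSum.add_modEq_two hbo (digitSqSum.add_modEq_two hbo (hF o ho o' ho') z₁) z₂
    exact ((ih _ hG G hGpar rfl).of_image_digitSqSum hb z₂).of_image_digitSqSum hb z₁

end Attraction

theorem stmt_13 (c b : ℕ) (hb : 2 ≤ b) (hbo : Odd b) (u : ℕ) (hu : inU c b u) :
    ∀ N : ℕ, 0 < N → ∃ n : ℕ, 0 < n ∧
      ∀ i : ℕ, i < N → ∃ k : ℕ, (S c b)^[k] (n + 2 * i) = u := by
  intro N _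
  have hF : ∀ o ∈ (Finset.range N).image (2 * ·), ∀ o' ∈ (Finset.range N).image (2 * ·),
      o ≡ o' [MOD 2] := by
    simp [Nat.ModEq]
  obtain ⟨M, hM, hMF⟩ := hasLargeAttractedTranslates_of_modEq_two hb hbo hu _ hF 1
  exact ⟨M, hM, fun i hi => hMF (2 * i) (Finset.mem_image_of_mem _ (Finset.mem_range.mpr hi))⟩
end
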